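/- For γ ∈ (0,1), the γ-Hölder seminorm of a continuous function f : [0,1] → ℝ is equivalent to its dyadic version: there exist constants c, C > 0 depending only on γ such that c·[f]_γ ≤ sup_{n ∈ ℕ, 1 ≤ k ≤ 2ⁿ} 2^{γn} |f(k2^{-n}) − f((k−1)2^{-n})| ≤ C·[f]_γ, where [f]_γ = sup_{x ≠ y} |f(x) − f(y)|/|x − y|^γ. -/

import Mathlib

open ENNReal

/-- The `γ`-Hölder seminorm of `f` on `[0,1]`, as an extended real:
`[f]_γ = sup_{x ≠ y ∈ [0,1]} |f(x) − f(y)| / |x − y|^γ`. -/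
noncomputable def holderSeminorm (γ : ℝ) (f : ℝ → ℝ) : ℝ≥0∞ :=
  ⨆ q : {q : ℝ × ℝ // q.1 ∈ Set.Icc (0 : ℝ) 1 ∧ q.2 ∈ Set.Icc (0 : ℝ) 1 ∧ q.1 ≠ q.2},
    ENNReal.ofReal (|f q.1.1 - f q.1.2| / |q.1.1 - q.1.2| ^ γ)

/-- The dyadic version of the `γ`-Hölder seminorm:
`sup_{n ∈ ℕ, 1 ≤ k ≤ 2ⁿ} 2^{γn} |f(k 2^{-n}) − f((k−1) 2^{-n})|`. -/
noncomputable def dyadicHolderSeminorm (γ : ℝ) (f : ℝ → ℝ) : ℝ≥0∞ :=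
  ⨆ n : ℕ, ⨆ k : {k : ℕ // 1 ≤ k ∧ k ≤ 2 ^ n},
    ENNReal.ofReal ((2 : ℝ) ^ (γ * n) *
      |f ((k : ℝ) / 2 ^ n) - f (((k : ℝ) - 1) / 2 ^ n)|)

section KCAux

/-- Telescoping: control of consecutive dyadic increments at level n gives
control between any two dyadic points at level n. -/
lemma hol_telescope (f : ℝ → ℝ) (n : ℕ) (c : ℝ)
    (h : ∀ k : ℕ, 1 ≤ k → k ≤ 2 ^ n →
      |f ((k : ℝ) / 2 ^ n) - f (((k : ℝ) - 1) / 2 ^ n)| ≤ c) :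
    ∀ a b : ℕ, a ≤ b → b ≤ 2 ^ n →
      |f ((b : ℝ) / 2 ^ n) - f ((a : ℝ) / 2 ^ n)| ≤ ((b - a : ℕ) : ℝ) * c := by
  intro a b hab hb
  induction b, hab using Nat.le_induction with
  | base => simp
  | succ b hab ih =>
    have hb' : b ≤ 2 ^ n := by omega
    have h1 := h (b + 1) (by omega) hb
    have := abs_sub_abs_le_abs_sub (f ((b+1 : ℕ) / (2:ℝ) ^ n)) (f ((a:ℕ) / (2:ℝ)^n))
    calc |f (((b + 1 : ℕ) : ℝ) / 2 ^ n) - f ((a : ℝ) / 2 ^ n)|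
        ≤ |f (((b + 1 : ℕ) : ℝ) / 2 ^ n) - f ((b : ℝ) / 2 ^ n)|
          + |f ((b : ℝ) / 2 ^ n) - f ((a : ℝ) / 2 ^ n)| := abs_sub_le _ _ _
      _ ≤ c + ((b - a : ℕ) : ℝ) * c := by
          refine add_le_add ?_ (ih hb')
          have : ((b + 1 : ℕ) : ℝ) - 1 = (b : ℝ) := by push_cast; ring
          rw [← this]; exact_mod_cast h1
      _ = ((b + 1 - a : ℕ) : ℝ) * c := by
          have : (b + 1 - a : ℕ) = (b - a) + 1 := by omega
          rw [this]; push_cast; ring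

noncomputable def xd (x : ℝ) (n : ℕ) : ℝ := (⌊(2:ℝ) ^ n * x⌋ : ℝ) / 2 ^ n

lemma xd_floor_nonneg {x : ℝ} (hx : 0 ≤ x) (n : ℕ) : 0 ≤ ⌊(2:ℝ) ^ n * x⌋ :=
  Int.floor_nonneg.2 (by positivity)

lemma xd_floor_le {x : ℝ} (hx : x ≤ 1) (hx0 : 0 ≤ x) (n : ℕ) : ⌊(2:ℝ) ^ n * x⌋ ≤ 2 ^ n := by
  have : (2:ℝ) ^ n * x ≤ 2 ^ n := by nlinarith [pow_pos (by norm_num : (0:ℝ) < 2) n]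
  have h2 : ⌊(2:ℝ)^n * x⌋ ≤ ⌊(2:ℝ)^n⌋ := Int.floor_le_floor this
  have : ⌊(2:ℝ)^n⌋ = (2:ℤ)^n := by
    rw [show ((2:ℝ)^n) = (((2:ℤ)^n : ℤ) : ℝ) by push_cast; ring, Int.floor_intCast]
  omega

lemma xd_le {x : ℝ} (n : ℕ) : xd x n ≤ x := by
  have h2 : (0:ℝ) < 2 ^ n := by positivity
  rw [xd, div_le_iff₀ h2]
  calc (⌊(2:ℝ) ^ n * x⌋ : ℝ) ≤ (2:ℝ) ^ n * x := Int.floor_le _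
    _ = x * 2 ^ n := by ring

lemma lt_xd_add {x : ℝ} (n : ℕ) : x - (1/2) ^ n < xd x n := by
  have h2 : (0:ℝ) < 2 ^ n := by positivity
  rw [xd, lt_div_iff₀ h2]
  have := Int.lt_floor_add_one ((2:ℝ) ^ n * x)
  have hh : (1/2:ℝ) ^ n * 2 ^ n = 1 := by
    rw [← mul_pow]; norm_num
  nlinarith

lemma xd_mem {x : ℝ} (hx : x ∈ Set.Icc (0:ℝ) 1) (n : ℕ) : xd x n ∈ Set.Icc (0:ℝ) 1 := by
  constructor
  · have := xd_floor_nonneg hx.1 n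
    rw [xd]; positivity
  · exact (xd_le n).trans hx.2

lemma xd_tendsto {x : ℝ} : Filter.Tendsto (xd x) Filter.atTop (nhds x) := by
  have h1 : Filter.Tendsto (fun n : ℕ => x - (1/2:ℝ) ^ n) Filter.atTop (nhds (x - 0)) :=
    Filter.Tendsto.const_sub _ (tendsto_pow_atTop_nhds_zero_of_lt_one (by norm_num) (by norm_num))
  rw [sub_zero] at h1
  exact tendsto_of_tendsto_of_tendsto_of_le_of_le h1 tendsto_const_nhds
    (fun n => (lt_xd_add n).le) (fun n => xd_le n)

/-- One refinement step. -/
lemma xd_step (f : ℝ → ℝ) {x : ℝ} (hx : x ∈ Set.Icc (0:ℝ) 1) (n : ℕ) (c : ℝ) (hc : 0 ≤ c)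
    (h : ∀ k : ℕ, 1 ≤ k → k ≤ 2 ^ (n+1) →
      |f ((k : ℝ) / 2 ^ (n+1)) - f (((k : ℝ) - 1) / 2 ^ (n+1))| ≤ c) :
    |f (xd x (n+1)) - f (xd x n)| ≤ c := by
  set a := ⌊(2:ℝ) ^ n * x⌋ with ha
  set b := ⌊(2:ℝ) ^ (n+1) * x⌋ with hb
  have ha0 : 0 ≤ a := xd_floor_nonneg hx.1 n
  have hb2 : b ≤ 2 ^ (n+1) := xd_floor_le hx.2 hx.1 (n+1)
  have hfl : (a:ℝ) ≤ 2 ^ n * x := Int.floor_le _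
  have hfl2 : (b:ℝ) ≤ 2 ^ (n+1) * x := Int.floor_le _
  have hlt : (2:ℝ) ^ n * x < a + 1 := Int.lt_floor_add_one _
  have hlt2 : (2:ℝ) ^ (n+1) * x < b + 1 := Int.lt_floor_add_one _
  have hab1 : 2 * a ≤ b := by
    have : ((2*a : ℤ) : ℝ) ≤ 2 ^ (n+1) * x := by push_cast; rw [pow_succ]; nlinarith
    exact Int.le_floor.2 this
  have hab2 : b ≤ 2 * a + 1 := by
    have : (b:ℝ) < ((2*a+2 : ℤ) : ℝ) := by
      push_cast; rw [pow_succ] at hfl2; nlinarith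
    have := by exact_mod_cast this
    omega
  have hxd_n : xd x n = (2 * (a:ℝ)) / 2 ^ (n+1) := by
    rw [xd, pow_succ]
    field_simp; ring
  rcases (by omega : b = 2 * a ∨ b = 2 * a + 1) with hcase | hcase
  · have : xd x (n+1) = xd x n := by
      rw [xd, hxd_n, ← hb, hcase]; push_cast; ring_nf
    rw [this]; simpa using hc
  · have hk1 : 1 ≤ b.toNat := by omega
    have hk2 : b.toNat ≤ 2 ^ (n+1) := by
      have : (2:ℤ)^(n+1) = ((2^(n+1) : ℕ) : ℤ) := by push_cast; ring
      omega
    have hbnn : 0 ≤ b := by omega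
    have hcast : ((b.toNat : ℕ) : ℝ) = (b : ℝ) := by
      exact_mod_cast Int.toNat_of_nonneg hbnn
    have := h b.toNat hk1 hk2
    rw [hcast] at this
    have e1 : xd x (n+1) = (b:ℝ) / 2 ^ (n+1) := by rw [xd]
    have e2 : ((b:ℝ) - 1) / 2 ^ (n+1) = xd x n := by
      rw [hxd_n, hcase]; push_cast; ring_nf
    rw [e1, ← e2]
    exact this

/-- Tail estimate via chaining. -/
lemma xd_tail (f : ℝ → ℝ) (hf : ContinuousOn f (Set.Icc 0 1)) {x : ℝ}
    (hx : x ∈ Set.Icc (0:ℝ) 1) (d r : ℝ) (hd : 0 ≤ d) (hr0 : 0 < r) (hr1 : r < 1)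
    (hstep : ∀ n : ℕ, |f (xd x (n+1)) - f (xd x n)| ≤ d * r ^ (n+1)) (m : ℕ) :
    |f x - f (xd x m)| ≤ d / (1 - r) * r ^ m := by
  have h1r : 0 < 1 - r := by linarith
  have key : ∀ N, m ≤ N →
      |f (xd x N) - f (xd x m)| ≤ d / (1 - r) * (r ^ (m+1) - r ^ (N+1)) := by
    intro N hN
    induction N, hN using Nat.le_induction with
    | base => simp
    | succ N hN ih =>
      have e : d * r ^ (N+1) = d / (1 - r) * (r ^ (N+1) - r ^ (N+2)) := by
        field_simp; ring
      calc |f (xd x (N+1)) - f (xd x m)|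
          ≤ |f (xd x (N+1)) - f (xd x N)| + |f (xd x N) - f (xd x m)| := abs_sub_le _ _ _
        _ ≤ d * r ^ (N+1) + d / (1 - r) * (r ^ (m+1) - r ^ (N+1)) :=
            add_le_add (hstep N) ih
        _ = d / (1 - r) * (r ^ (m+1) - r ^ (N+1+1)) := by rw [e]; ring
  have hbound : ∀ N, m ≤ N → |f (xd x N) - f (xd x m)| ≤ d / (1 - r) * r ^ m := by
    intro N hN
    refine (key N hN).trans ?_
    have h1 : r ^ (m+1) - r ^ (N+1) ≤ r ^ m := by
      have := pow_nonneg hr0.le (N+1)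
      have : r ^ (m+1) ≤ r ^ m := pow_le_pow_of_le_one hr0.le hr1.le (by omega)
      nlinarith [pow_nonneg hr0.le (N+1)]
    have : 0 ≤ d / (1 - r) := by positivity
    nlinarith
  -- pass to the limit
  have hc : ContinuousWithinAt f (Set.Icc 0 1) x := hf x hx
  have ht : Filter.Tendsto (xd x) Filter.atTop (nhdsWithin x (Set.Icc 0 1)) := by
    rw [tendsto_nhdsWithin_iff]
    exact ⟨xd_tendsto, Filter.Eventually.of_forall (xd_mem hx)⟩
  have hT : Filter.Tendsto (fun N => |f (xd x N) - f (xd x m)|) Filter.atTop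
      (nhds |f x - f (xd x m)|) := by
    have := hc.tendsto.comp ht
    exact ((this.sub tendsto_const_nhds).abs)
  exact le_of_tendsto hT (Filter.eventually_atTop.2 ⟨m, hbound⟩)

lemma hol_core (f : ℝ → ℝ) (hf : ContinuousOn f (Set.Icc 0 1)) (γ d : ℝ)
    (hγ : 0 < γ) (hd : 0 ≤ d)
    (h : ∀ n k : ℕ, 1 ≤ k → k ≤ 2 ^ n →
      |f ((k : ℝ) / 2 ^ n) - f (((k : ℝ) - 1) / 2 ^ n)| ≤ d * ((1/2 : ℝ) ^ γ) ^ n)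
    {x y : ℝ} (hx : x ∈ Set.Icc (0:ℝ) 1) (hy : y ∈ Set.Icc (0:ℝ) 1) (hxy : x < y) :
    |f y - f x| ≤ 4 / (1 - (1/2 : ℝ) ^ γ) * d * (y - x) ^ γ := by
  set r : ℝ := (1/2 : ℝ) ^ γ with hrdef
  have hr0 : 0 < r := Real.rpow_pos_of_pos (by norm_num) _
  have hr1 : r < 1 := Real.rpow_lt_one (by norm_num) (by norm_num) hγ
  have h1r : 0 < 1 - r := by linarith
  have hstepx : ∀ n : ℕ, |f (xd x (n+1)) - f (xd x n)| ≤ d * r ^ (n+1) :=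
    fun n => xd_step f hx n _ (by positivity) (h (n+1))
  have hstepy : ∀ n : ℕ, |f (xd y (n+1)) - f (xd y n)| ≤ d * r ^ (n+1) :=
    fun n => xd_step f hy n _ (by positivity) (h (n+1))
  -- choose the scale m
  have hex : ∃ m : ℕ, (1/2 : ℝ) ^ m ≤ y - x := by
    obtain ⟨n, hn⟩ := exists_pow_lt_of_lt_one (sub_pos.2 hxy) (by norm_num : (1/2:ℝ) < 1)
    exact ⟨n, hn.le⟩
  classical
  set m := Nat.find hex with hmdef
  have hm1 : (1/2 : ℝ) ^ m ≤ y - x := Nat.find_spec hex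
  have hm2 : y - x < 2 * (1/2 : ℝ) ^ m := by
    rcases Nat.eq_zero_or_pos m with h0 | h0
    · rw [h0]
      have := hy.2; have := hx.1
      norm_num; linarith
    · have hmin := Nat.find_min hex (show m - 1 < m by omega)
      push_neg at hmin
      have he : (1/2 : ℝ) ^ (m-1) = 2 * (1/2) ^ m := by
        have h2 : (1/2 : ℝ) ^ m = (1/2) ^ (m-1) * (1/2) := by
          rw [← pow_succ]; congr 1; omega
        rw [h2]; ring
      linarith [he ▸ hmin]
  -- middle estimate at level m
  set A := (⌊(2:ℝ) ^ m * x⌋).toNat with hA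
  set B := (⌊(2:ℝ) ^ m * y⌋).toNat with hB
  have hAx : ((A : ℕ) : ℝ) = (⌊(2:ℝ) ^ m * x⌋ : ℝ) := by
    rw [hA]; exact_mod_cast Int.toNat_of_nonneg (xd_floor_nonneg hx.1 m)
  have hBy : ((B : ℕ) : ℝ) = (⌊(2:ℝ) ^ m * y⌋ : ℝ) := by
    rw [hB]; exact_mod_cast Int.toNat_of_nonneg (xd_floor_nonneg hy.1 m)
  have hAB : A ≤ B := by
    have : ⌊(2:ℝ) ^ m * x⌋ ≤ ⌊(2:ℝ) ^ m * y⌋ := by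
      apply Int.floor_le_floor
      have : (0:ℝ) < 2 ^ m := by positivity
      nlinarith
    omega
  have hB2 : B ≤ 2 ^ m := by
    have h1 := xd_floor_le hy.2 hy.1 m
    have h2 : (B : ℤ) = ⌊(2:ℝ) ^ m * y⌋ := Int.toNat_of_nonneg (xd_floor_nonneg hy.1 m)
    have h3 : (B : ℤ) ≤ (2:ℤ) ^ m := by rw [h2]; exact h1
    exact_mod_cast h3
  have hBA2 : B ≤ A + 2 := by
    have h2m : (0:ℝ) < 2 ^ m := by positivity
    have hfb : ((⌊(2:ℝ) ^ m * y⌋ : ℤ) : ℝ) ≤ 2 ^ m * y := Int.floor_le _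
    have hfa : (2:ℝ) ^ m * x < (⌊(2:ℝ) ^ m * x⌋ : ℝ) + 1 := Int.lt_floor_add_one _
    have hc : (2:ℝ) ^ m * (y - x) < 2 := by
      have e : (2:ℝ) ^ m * (1/2) ^ m = 1 := by rw [← mul_pow]; norm_num
      nlinarith
    have : ((B : ℕ) : ℝ) < ((A : ℕ) : ℝ) + 3 := by
      rw [hAx, hBy] at *
      nlinarith
    have h4 : (B : ℝ) < ((A + 3 : ℕ) : ℝ) := by push_cast; linarith
    have h5 : B < A + 3 := by exact_mod_cast h4
    omega
  have hmid : |f (xd y m) - f (xd x m)| ≤ 2 * (d * r ^ m) := by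
    have ht := hol_telescope f m (d * r ^ m) (h m) A B hAB hB2
    have ex : xd x m = (A : ℝ) / 2 ^ m := by rw [xd, ← hAx]
    have ey : xd y m = (B : ℝ) / 2 ^ m := by rw [xd, ← hBy]
    rw [ex, ey]
    refine ht.trans ?_
    have hle : ((B - A : ℕ) : ℝ) ≤ 2 := by
      have : B - A ≤ 2 := by omega
      exact_mod_cast this
    have hdr : 0 ≤ d * r ^ m := by positivity
    nlinarith
  have htx := xd_tail f hf hx d r hd hr0 hr1 hstepx m
  have hty := xd_tail f hf hy d r hd hr0 hr1 hstepy m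
  have htri : |f y - f x| ≤ d / (1 - r) * r ^ m + (2 * (d * r ^ m) + d / (1 - r) * r ^ m) := by
    have t1 := abs_sub_le (f y) (f (xd y m)) (f x)
    have t2 := abs_sub_le (f (xd y m)) (f (xd x m)) (f x)
    have t3 : |f (xd x m) - f x| = |f x - f (xd x m)| := abs_sub_comm _ _
    linarith
  have hcoef : d / (1 - r) * r ^ m + (2 * (d * r ^ m) + d / (1 - r) * r ^ m)
      ≤ 4 / (1 - r) * d * r ^ m := by
    have e : 4 / (1 - r) * d * r ^ m =
        (d / (1 - r) * r ^ m + (2 * (d * r ^ m) + d / (1 - r) * r ^ m))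
          + (2 * r / (1 - r)) * (d * r ^ m) := by
      field_simp; ring
    have hnn : 0 ≤ (2 * r / (1 - r)) * (d * r ^ m) := by positivity
    linarith
  have hrm_le : r ^ m ≤ (y - x) ^ γ := by
    calc r ^ m = r ^ (m : ℝ) := (Real.rpow_natCast r m).symm
      _ = (1/2 : ℝ) ^ (γ * (m : ℝ)) := by rw [hrdef, ← Real.rpow_mul (by norm_num)]
      _ = ((1/2 : ℝ) ^ (m : ℝ)) ^ γ := by rw [mul_comm, Real.rpow_mul (by norm_num)]
      _ = ((1/2 : ℝ) ^ m) ^ γ := by rw [Real.rpow_natCast]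
      _ ≤ (y - x) ^ γ := Real.rpow_le_rpow (by positivity) hm1 hγ.le
  have hfin : 4 / (1 - r) * d * r ^ m ≤ 4 / (1 - r) * d * (y - x) ^ γ := by
    have : 0 ≤ 4 / (1 - r) * d := by positivity
    nlinarith
  linarith

end KCAux

/-- For `γ ∈ (0,1)`, the `γ`-Hölder seminorm of a continuous `f : ℝ → ℝ` on `[0,1]` is
equivalent to its dyadic version, with constants depending only on `γ`. -/
theorem stmt_19 (γ : ℝ) (hγ : γ ∈ Set.Ioo (0 : ℝ) 1) :
    ∃ c C : ℝ, 0 < c ∧ 0 < C ∧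
      ∀ f : ℝ → ℝ, ContinuousOn f (Set.Icc 0 1) →
        ENNReal.ofReal c * holderSeminorm γ f ≤ dyadicHolderSeminorm γ f ∧
        dyadicHolderSeminorm γ f ≤ ENNReal.ofReal C * holderSeminorm γ f := by
  obtain ⟨hγ0, hγ1⟩ := hγ
  set r : ℝ := (1/2 : ℝ) ^ γ with hrdef
  have hr0 : 0 < r := Real.rpow_pos_of_pos (by norm_num) _
  have hr1 : r < 1 := Real.rpow_lt_one (by norm_num) (by norm_num) hγ0
  have h1r : 0 < 1 - r := by linarith
  have hrinv : ∀ n : ℕ, (2 : ℝ) ^ (γ * (n : ℝ)) * r ^ n = 1 := by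
    intro n
    have h2 : (2 : ℝ) ^ (γ * (n : ℝ)) = ((2:ℝ) ^ γ) ^ n := by
      rw [Real.rpow_mul (by norm_num), Real.rpow_natCast]
    have hr2 : r = ((2:ℝ) ^ γ)⁻¹ := by
      rw [hrdef, one_div, Real.inv_rpow (by norm_num)]
    rw [h2, hr2, inv_pow, mul_inv_cancel₀]
    positivity
  refine ⟨(1 - r) / 4, 1, by linarith, one_pos, fun f hf => ?_⟩
  constructor
  · -- lower bound
    by_cases hD : dyadicHolderSeminorm γ f = ⊤
    · rw [hD]; exact le_top
    set d := (dyadicHolderSeminorm γ f).toReal with hd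
    have hd0 : 0 ≤ d := ENNReal.toReal_nonneg
    have hkey : ∀ n k : ℕ, 1 ≤ k → k ≤ 2 ^ n →
        |f ((k : ℝ) / 2 ^ n) - f (((k : ℝ) - 1) / 2 ^ n)| ≤ d * r ^ n := by
      intro n k hk1 hk2
      have hle : ENNReal.ofReal ((2 : ℝ) ^ (γ * n) *
          |f ((k : ℝ) / 2 ^ n) - f (((k : ℝ) - 1) / 2 ^ n)|) ≤ dyadicHolderSeminorm γ f := by
        exact le_iSup_of_le n (le_iSup (fun k : {k : ℕ // 1 ≤ k ∧ k ≤ 2 ^ n} =>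
          ENNReal.ofReal ((2 : ℝ) ^ (γ * (n:ℕ)) *
            |f ((k : ℝ) / 2 ^ n) - f (((k : ℝ) - 1) / 2 ^ n)|)) ⟨k, hk1, hk2⟩)
      have h1 : (2 : ℝ) ^ (γ * (n:ℝ)) *
          |f ((k : ℝ) / 2 ^ n) - f (((k : ℝ) - 1) / 2 ^ n)| ≤ d :=
        (ENNReal.ofReal_le_iff_le_toReal hD).1 hle
      have h2 : (0:ℝ) < (2 : ℝ) ^ (γ * (n:ℝ)) := Real.rpow_pos_of_pos (by norm_num) _
      have h3 := mul_le_mul_of_nonneg_right h1 (pow_nonneg hr0.le n)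
      have e : |f ((k : ℝ) / 2 ^ n) - f (((k : ℝ) - 1) / 2 ^ n)| =
          r ^ n * ((2:ℝ) ^ (γ * (n:ℝ)) * |f ((k : ℝ) / 2 ^ n) - f (((k : ℝ) - 1) / 2 ^ n)|) := by
        rw [← mul_assoc, mul_comm (r ^ n), hrinv n, one_mul]
      rw [e, mul_comm (r ^ n)]; exact h3
    have hH : holderSeminorm γ f ≤ ENNReal.ofReal (4 / (1 - r) * d) := by
      apply iSup_le
      rintro ⟨⟨x, y⟩, hx, hy, hne⟩
      simp only
      have habs : (0:ℝ) < |x - y| := abs_pos.2 (sub_ne_zero.2 hne)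
      have hpow : (0:ℝ) < |x - y| ^ γ := Real.rpow_pos_of_pos habs _
      apply ENNReal.ofReal_le_ofReal
      rw [div_le_iff₀ hpow]
      rcases Ne.lt_or_gt hne with hlt | hlt
      · have := hol_core f hf γ d hγ0 hd0 hkey hx hy hlt
        rw [abs_sub_comm (f x) (f y), abs_of_neg (by linarith : x - y < 0)]
        calc |f y - f x| ≤ 4 / (1 - r) * d * (y - x) ^ γ := this
          _ = 4 / (1 - r) * d * (-(x - y)) ^ γ := by ring_nf
      · have := hol_core f hf γ d hγ0 hd0 hkey hy hx hlt
        rw [abs_of_pos (by linarith : (0:ℝ) < x - y)]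
        exact this
    calc ENNReal.ofReal ((1 - r) / 4) * holderSeminorm γ f
        ≤ ENNReal.ofReal ((1 - r) / 4) * ENNReal.ofReal (4 / (1 - r) * d) :=
          mul_le_mul_right hH _
      _ = ENNReal.ofReal ((1 - r) / 4 * (4 / (1 - r) * d)) :=
          (ENNReal.ofReal_mul (by positivity)).symm
      _ = ENNReal.ofReal d := by
          congr 1
          field_simp
      _ = dyadicHolderSeminorm γ f := ENNReal.ofReal_toReal hD
  · -- upper bound, C = 1
    rw [ENNReal.ofReal_one, one_mul]
    apply iSup_le
    intro n
    apply iSup_le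
    rintro ⟨k, hk1, hk2⟩
    simp only
    have h2n : (0:ℝ) < 2 ^ n := by positivity
    have hxmem : (k : ℝ) / 2 ^ n ∈ Set.Icc (0:ℝ) 1 := by
      constructor
      · positivity
      · rw [div_le_one h2n]; exact_mod_cast hk2
    have hymem : ((k : ℝ) - 1) / 2 ^ n ∈ Set.Icc (0:ℝ) 1 := by
      constructor
      · apply div_nonneg _ h2n.le
        have : (1:ℝ) ≤ (k:ℝ) := by exact_mod_cast hk1
        linarith
      · rw [div_le_one h2n]
        have : (k:ℝ) ≤ 2 ^ n := by exact_mod_cast hk2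
        linarith
    have hne : (k : ℝ) / 2 ^ n ≠ ((k : ℝ) - 1) / 2 ^ n := by
      intro hcon
      rw [div_eq_div_iff h2n.ne' h2n.ne'] at hcon
      nlinarith
    have habs : |(k : ℝ) / 2 ^ n - ((k : ℝ) - 1) / 2 ^ n| = ((2:ℝ) ^ n)⁻¹ := by
      rw [div_sub_div_same]
      have : (k:ℝ) - ((k:ℝ) - 1) = 1 := by ring
      rw [this, abs_of_pos (by positivity)]
      exact one_div _
    have heq : (2 : ℝ) ^ (γ * n) * |f ((k : ℝ) / 2 ^ n) - f (((k : ℝ) - 1) / 2 ^ n)| =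
        |f ((k : ℝ) / 2 ^ n) - f (((k : ℝ) - 1) / 2 ^ n)| /
          |(k : ℝ) / 2 ^ n - ((k : ℝ) - 1) / 2 ^ n| ^ γ := by
      rw [habs]
      have e1 : ((2:ℝ) ^ n)⁻¹ ^ γ = ((2:ℝ) ^ (γ * (n:ℝ)))⁻¹ := by
        rw [← Real.rpow_natCast 2 n, Real.inv_rpow (by positivity),
          ← Real.rpow_mul (by norm_num), mul_comm γ (n:ℝ)]
      rw [e1, div_inv_eq_mul]
      ring
    calc ENNReal.ofReal ((2 : ℝ) ^ (γ * n) *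
          |f ((k : ℝ) / 2 ^ n) - f (((k : ℝ) - 1) / 2 ^ n)|)
        = ENNReal.ofReal (|f ((k : ℝ) / 2 ^ n) - f (((k : ℝ) - 1) / 2 ^ n)| /
            |(k : ℝ) / 2 ^ n - ((k : ℝ) - 1) / 2 ^ n| ^ γ) := by rw [heq]
      _ ≤ holderSeminorm γ f :=
          le_iSup (fun q : {q : ℝ × ℝ // q.1 ∈ Set.Icc (0 : ℝ) 1 ∧ q.2 ∈ Set.Icc (0 : ℝ) 1 ∧ q.1 ≠ q.2} =>
            ENNReal.ofReal (|f q.1.1 - f q.1.2| / |q.1.1 - q.1.2| ^ γ))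
            ⟨((k : ℝ) / 2 ^ n, ((k : ℝ) - 1) / 2 ^ n), hxmem, hymem, hne⟩
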